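/- arXiv:1709.06444 — 2 statements merged into one kernel-verified Lean document; each statement's English description precedes it below -/
import Mathlib

section
/- Let $G, H > 0$ and set $W = H + \sqrt{H^2 + (G+H)^2}$. Let $(a_t)_{t \ge 1}$ be a sequence of nonnegative reals with $a_1 \le W^2$ satisfying, for all $t \ge 1$, $a_{t+1} \le \frac{t-1}{t} a_t + \frac{(G+H)^2}{t^2} + \frac{2H \sqrt{a_t}}{t}$. Then $a_t \le W^2$ for all $t \ge 1$. -/
theorem stmt_5 (G H : ℝ) (hG : 0 < G) (hH : 0 < H)
    (W : ℝ) (hW : W = H + Real.sqrt (H ^ 2 + (G + H) ^ 2))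
    (a : ℕ → ℝ) (hnn : ∀ t, 0 ≤ a t) (h1 : a 1 ≤ W ^ 2)
    (hrec : ∀ t : ℕ, 1 ≤ t →
      a (t + 1) ≤ ((t : ℝ) - 1) / t * a t + (G + H) ^ 2 / (t : ℝ) ^ 2
        + 2 * H * Real.sqrt (a t) / t) :
    ∀ t : ℕ, 1 ≤ t → a t ≤ W ^ 2 := by
  have hs : Real.sqrt (H ^ 2 + (G + H) ^ 2) ^ 2 = H ^ 2 + (G + H) ^ 2 :=
    Real.sq_sqrt (by positivity)
  have hWpos : 0 < W := by
    rw [hW]; have := Real.sqrt_nonneg (H ^ 2 + (G + H) ^ 2); linarith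
  have hkey : W ^ 2 = 2 * H * W + (G + H) ^ 2 := by
    subst hW; nlinarith [hs]
  intro t ht
  induction t with
  | zero => omega
  | succ n ih =>
    rcases Nat.eq_or_lt_of_le ht with h | h
    · simpa [← h] using h1
    · have hn : 1 ≤ n := by omega
      have han := ih hn
      have hsq : Real.sqrt (a n) ≤ W := by
        have := Real.sqrt_le_sqrt han
        rwa [Real.sqrt_sq hWpos.le] at this
      have hnp : (1 : ℝ) ≤ (n : ℝ) := by exact_mod_cast hn
      have hn0 : (0 : ℝ) < (n : ℝ) := by linarith
      have := hrec n hn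
      have h2 : ((n : ℝ) - 1) / n * a n + (G + H) ^ 2 / (n : ℝ) ^ 2
          + 2 * H * Real.sqrt (a n) / n ≤ W ^ 2 := by
        have e1 : ((n : ℝ) - 1) / n * a n ≤ ((n : ℝ) - 1) / n * W ^ 2 := by
          exact mul_le_mul_of_nonneg_left han (div_nonneg (by linarith) hn0.le)
        have e2 : (G + H) ^ 2 / (n : ℝ) ^ 2 ≤ (G + H) ^ 2 / n := by
          gcongr
          nlinarith
        have e3 : 2 * H * Real.sqrt (a n) / n ≤ 2 * H * W / n := by
          gcongr
        have : ((n : ℝ) - 1) / n * W ^ 2 + (G + H) ^ 2 / n + 2 * H * W / n = W ^ 2 := by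
          field_simp
          nlinarith [hkey]
        linarith
      linarith
end

section
/- Let $H$ be a real Hilbert space, $J : H \to \mathbb{R}$ a 1-strongly convex function with global minimizer $w^*$. Let $(w_t)_{t\ge1}$, $(g_t)_{t\ge1}$, $(h_t)_{t\ge1}$ be sequences in $H$ with $w_{t+1} = w_t - \eta_t g_t - \eta_t h_t$ where $\eta_t = 1/t$, and suppose there are constants $G, H_0, W, R \ge 0$ and nonnegative reals $(\beta_t)$ such that for all $t$: (i) $\langle w_t - w^*, g_t \rangle \ge J(w_t) - J(w^*) + \frac{1}{2}\|w_t - w^*\|^2$; (ii) $\|g_t + h_t\| \le G + H_0$; (iii) $\langle w_t - w^*, -h_t \rangle \le R W \beta_t$. Then $\frac{1}{T}\sum_{t=1}^{T} J(w_t) - J(w^*) \le \frac{(G+H_0)^2 (\log T + 1)}{2T} + \frac{WR}{T} \sum_{t=1}^{T} \beta_t$. -/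
/-!
Expanding `‖w_{t+1} - w*‖²` for the step `w_{t+1} = w_t - η_t (g_t + h_t)` expresses
`⟪w_t - w*, g_t + h_t⟫` through the decrease of the squared distance plus `η_t ‖g_t + h_t‖² / 2`.
Combined with (i) and (iii), each suboptimality gap `J(w_t) - J(w*)` is bounded by
`((t - 1)‖w_t - w*‖² - t‖w_{t+1} - w*‖²)/2 + (G + H₀)²/(2t) + RWβ_t`; the distance terms telescope
to a nonpositive quantity, and the step sizes sum to at most `log T + 1`.
-/

open RealInnerProductSpace Finset

theorem sum_Icc_inv_le_log_add_one (T : ℕ) :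
    ∑ t ∈ Icc 1 T, ((t : ℝ))⁻¹ ≤ Real.log T + 1 := by
  have h := harmonic_le_one_add_log T
  rw [harmonic_eq_sum_Icc] at h
  push_cast at h
  linarith

theorem sum_Icc_weighted_telescope (a : ℕ → ℝ) (T : ℕ) :
    ∑ t ∈ Icc 1 T, (((t : ℝ) - 1) * a t - t * a (t + 1)) = -(T * a (T + 1)) := by
  induction T with
  | zero => simp
  | succ n ih =>
    rw [sum_Icc_succ_top (by omega), ih]
    push_cast
    ring

theorem real_inner_eq_of_sub_smul {E : Type*} [NormedAddCommGroup E] [InnerProductSpace ℝ E]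
    (x v : E) {η : ℝ} (hη : η ≠ 0) :
    ⟪x, v⟫ = (‖x‖ ^ 2 - ‖x - η • v‖ ^ 2) / (2 * η) + η * (‖v‖ ^ 2 / 2) := by
  rw [norm_sub_sq_real, real_inner_smul_right, norm_smul, mul_pow, Real.norm_eq_abs, sq_abs]
  field_simp
  ring

theorem le_of_perturbed_gradient_step {E : Type*} [NormedAddCommGroup E] [InnerProductSpace ℝ E]
    {x g h : E} {η e D r : ℝ} (hη : 0 < η)
    (hg : e + ‖x‖ ^ 2 / 2 ≤ ⟪x, g⟫) (hD : ‖g + h‖ ≤ D) (hh : ⟪x, -h⟫ ≤ r) :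
    e ≤ (‖x‖ ^ 2 - ‖x - η • (g + h)‖ ^ 2) / (2 * η) - ‖x‖ ^ 2 / 2 + η * (D ^ 2 / 2) + r := by
  have hsplit : ⟪x, g⟫ = ⟪x, g + h⟫ + ⟪x, -h⟫ := by
    rw [inner_neg_right, inner_add_right]
    ring
  have hsq : η * (‖g + h‖ ^ 2 / 2) ≤ η * (D ^ 2 / 2) := by gcongr
  have hstep := real_inner_eq_of_sub_smul x (g + h) hη.ne'
  linarith

/-- With `η_t = 1/t` the weights `t` make the distance terms telescope, leaving the
harmonic sum of the step sizes. -/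
theorem sum_Icc_le_of_step_bound {e a b : ℕ → ℝ} {c : ℝ} {T : ℕ}
    (ha : 0 ≤ a (T + 1)) (hc : 0 ≤ c)
    (hstep : ∀ t ∈ Icc 1 T,
      e t ≤ (a t - a (t + 1)) / (2 * (1 / t)) - a t / 2 + 1 / t * c + b t) :
    ∑ t ∈ Icc 1 T, e t ≤ c * (Real.log T + 1) + ∑ t ∈ Icc 1 T, b t := by
  have hstep' : ∀ t ∈ Icc 1 T,
      e t ≤ (((t : ℝ) - 1) * a t - t * a (t + 1)) / 2 + c * (t : ℝ)⁻¹ + b t := by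
    intro t ht
    have hpos : (0 : ℝ) < t := by exact_mod_cast (mem_Icc.mp ht).1
    have hrewrite : (a t - a (t + 1)) / (2 * (1 / t)) - a t / 2 + 1 / t * c + b t
        = (((t : ℝ) - 1) * a t - t * a (t + 1)) / 2 + c * (t : ℝ)⁻¹ + b t := by
      field_simp
      ring
    exact hrewrite ▸ hstep t ht
  calc ∑ t ∈ Icc 1 T, e t
      ≤ ∑ t ∈ Icc 1 T, ((((t : ℝ) - 1) * a t - t * a (t + 1)) / 2 + c * (t : ℝ)⁻¹ + b t) :=
        sum_le_sum hstep'
    _ = -(T * a (T + 1)) / 2 + c * ∑ t ∈ Icc 1 T, (t : ℝ)⁻¹ + ∑ t ∈ Icc 1 T, b t := by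
        rw [sum_add_distrib, sum_add_distrib, ← sum_div, sum_Icc_weighted_telescope, mul_sum]
    _ ≤ c * (Real.log T + 1) + ∑ t ∈ Icc 1 T, b t := by
        have hT : 0 ≤ (T : ℝ) * a (T + 1) := by positivity
        have := mul_le_mul_of_nonneg_left (sum_Icc_inv_le_log_add_one T) hc
        linarith

theorem stmt_10_general {E : Type*} [NormedAddCommGroup E] [InnerProductSpace ℝ E]
    (J : E → ℝ)
    (wstar : E)
    (w g h : ℕ → E) (G H0 W R : ℝ)
    (β : ℕ → ℝ)
    (hupd : ∀ t : ℕ, 1 ≤ t → w (t + 1) = w t - ((1 : ℝ) / t) • g t - ((1 : ℝ) / t) • h t)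
    (hi : ∀ t : ℕ, 1 ≤ t →
      ⟪w t - wstar, g t⟫ ≥ J (w t) - J wstar + ‖w t - wstar‖ ^ 2 / 2)
    (hii : ∀ t : ℕ, 1 ≤ t → ‖g t + h t‖ ≤ G + H0)
    (hiii : ∀ t : ℕ, 1 ≤ t → ⟪w t - wstar, -h t⟫ ≤ R * W * β t)
    (T : ℕ) (hT : 1 ≤ T) :
    (1 / (T : ℝ)) * ∑ t ∈ Finset.Icc 1 T, J (w t) - J wstar ≤
      (G + H0) ^ 2 * (Real.log T + 1) / (2 * T)
        + W * R / T * ∑ t ∈ Finset.Icc 1 T, β t := by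
  have hsum : ∑ t ∈ Icc 1 T, (J (w t) - J wstar) ≤
      (G + H0) ^ 2 / 2 * (Real.log T + 1) + ∑ t ∈ Icc 1 T, R * W * β t := by
    refine sum_Icc_le_of_step_bound (a := fun t => ‖w t - wstar‖ ^ 2) (by positivity)
      (by positivity) fun t ht => ?_
    have ht1 := (mem_Icc.mp ht).1
    have hdist : w (t + 1) - wstar = (w t - wstar) - ((1 : ℝ) / t) • (g t + h t) := by
      rw [hupd t ht1, smul_add]
      abel
    rw [hdist]
    exact le_of_perturbed_gradient_step (by positivity) (hi t ht1) (hii t ht1) (hiii t ht1)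
  have hTpos : (0 : ℝ) < T := by exact_mod_cast hT
  rw [sum_sub_distrib, sum_const, Nat.card_Icc, nsmul_eq_mul, ← mul_sum] at hsum
  push_cast at hsum
  calc 1 / (T : ℝ) * ∑ t ∈ Icc 1 T, J (w t) - J wstar
      = (∑ t ∈ Icc 1 T, J (w t) - T * J wstar) / T := by field_simp
    _ ≤ ((G + H0) ^ 2 / 2 * (Real.log T + 1) + R * W * ∑ t ∈ Icc 1 T, β t) / T := by gcongr
    _ = _ := by ring

theorem stmt_10 {E : Type*} [NormedAddCommGroup E] [InnerProductSpace ℝ E]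
    [CompleteSpace E] (J : E → ℝ)
    (hstrong : ConvexOn ℝ Set.univ (fun w => J w - ‖w‖ ^ 2 / 2))
    (wstar : E) (hmin : ∀ v, J wstar ≤ J v)
    (w g h : ℕ → E) (G H0 W R : ℝ)
    (hG : 0 ≤ G) (hH0 : 0 ≤ H0) (hW : 0 ≤ W) (hR : 0 ≤ R)
    (β : ℕ → ℝ) (hβ : ∀ t, 0 ≤ β t)
    (hupd : ∀ t : ℕ, 1 ≤ t → w (t + 1) = w t - ((1 : ℝ) / t) • g t - ((1 : ℝ) / t) • h t)
    (hi : ∀ t : ℕ, 1 ≤ t →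
      ⟪w t - wstar, g t⟫ ≥ J (w t) - J wstar + ‖w t - wstar‖ ^ 2 / 2)
    (hii : ∀ t : ℕ, 1 ≤ t → ‖g t + h t‖ ≤ G + H0)
    (hiii : ∀ t : ℕ, 1 ≤ t → ⟪w t - wstar, -h t⟫ ≤ R * W * β t)
    (T : ℕ) (hT : 1 ≤ T) :
    (1 / (T : ℝ)) * ∑ t ∈ Finset.Icc 1 T, J (w t) - J wstar ≤
      (G + H0) ^ 2 * (Real.log T + 1) / (2 * T)
        + W * R / T * ∑ t ∈ Finset.Icc 1 T, β t :=
  stmt_10_general J wstar w g h G H0 W R β hupd hi hii hiii T hT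
end
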